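/- Suppose X = (X_1,…,X_n) follows an elliptical distribution E_n(μ, Σ, τ), i.e., E[exp(i tᵀX)] = exp(i tᵀμ)·τ(tᵀΣt) for all t ∈ ℝ^n, where Σ = (σ_{ij}) is positive semi-definite with 1ᵀΣ1 > 0, and let Y ~ E_1(0, 1, τ) be a one-dimensional elliptical random variable with the same characteristic generator τ and CDF F. Set k_Σ = (Σ_{i=1}^n σ_i)/(Σ_{i,j} σ_{ij})^{1/2} with σ_i = √σ_{ii}. Then for every α ∈ (0,1), DQ^{VaR}_α(X) = (1 − F(k_Σ · VaR_α(Y)))/α. -/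

import Mathlib

open MeasureTheory

/-- Value at Risk at level `β`: `VaR_β(Z) = inf {x : P(Z ≤ x) ≥ 1 − β}`. -/
noncomputable def VaR {Ω : Type*} [MeasurableSpace Ω] (P : Measure Ω) (β : ℝ) (Z : Ω → ℝ) : ℝ :=
  sInf {x : ℝ | 1 - β ≤ (P {ω | Z ω ≤ x}).toReal}

/-- Diversification quotient based on the VaR class at level `α` (`I = (0,1)`, `inf ∅ = 1`). -/
noncomputable def DQVaR {Ω : Type*} [MeasurableSpace Ω] (P : Measure Ω) (α : ℝ)
    {n : ℕ} (X : Fin n → Ω → ℝ) : ℝ :=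
  sInf (insert 1 {β : ℝ | β ∈ Set.Ioo (0:ℝ) 1 ∧
      VaR P β (fun ω => ∑ i, X i ω) ≤ ∑ i, VaR P α (X i)}) / α

/-!
Every linear combination `wᵀX` of an elliptical vector has the characteristic function, hence the
law, of `wᵀμ + √(wᵀΣw) · Y`. Thus `VaR_α(X_i) = μ_i + σ_i VaR_α(Y)` and
`VaR_β(S) = ∑ μ_i + (1ᵀΣ1)^{1/2} VaR_β(Y)`, so `VaR_β(S) ≤ ∑ VaR_α(X_i)` says
`VaR_β(Y) ≤ k_Σ VaR_α(Y)`. By right-continuity of `F`, `VaR_β(Y) ≤ q ↔ 1 - β ≤ F(q)`, so this is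
`β ≥ 1 - F(k_Σ VaR_α(Y))`, and the infimum of such `β` is `1 - F(k_Σ VaR_α(Y))`.
-/

open ProbabilityTheory Set Filter

lemma sInf_setOf_le_cdf_le_iff (μ : Measure ℝ) [IsProbabilityMeasure μ] {r : ℝ}
    (hr : r ∈ Ioo 0 1) (q : ℝ) : sInf {x | r ≤ cdf μ x} ≤ q ↔ r ≤ cdf μ q := by
  set A := {x | r ≤ cdf μ x}
  have hne : A.Nonempty := ((tendsto_cdf_atTop μ).eventually (eventually_ge_nhds hr.2)).exists
  have hbdd : BddBelow A := by
    obtain ⟨x₀, hx₀⟩ := ((tendsto_cdf_atBot μ).eventually (eventually_lt_nhds hr.1)).exists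
    exact ⟨x₀, fun x hx => le_of_not_gt fun hlt => (hx.trans (monotone_cdf μ hlt.le)).not_gt hx₀⟩
  refine ⟨fun h => ?_, fun h => csInf_le hbdd h⟩
  have hmem : r ≤ cdf μ (sInf A) := by
    refine ge_of_tendsto (((cdf μ).right_continuous _).mono Ioi_subset_Ici_self) ?_
    filter_upwards [self_mem_nhdsWithin] with x hx
    obtain ⟨y, hyA, hyx⟩ := exists_lt_of_csInf_lt hne hx
    exact hyA.trans (monotone_cdf μ hyx.le)
  exact hmem.trans (monotone_cdf μ h)

lemma sInf_insert_one_setOf_le {a : ℝ} (ha : a ∈ Icc 0 1) :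
    sInf (insert 1 {β : ℝ | β ∈ Ioo 0 1 ∧ a ≤ β}) = a := by
  refine csInf_eq_of_forall_ge_of_forall_gt_exists_lt (insert_nonempty _ _) ?_ fun w hw => ?_
  · rintro β (rfl | ⟨-, hβ⟩)
    exacts [ha.2, hβ]
  · by_cases hw1 : 1 < w
    · exact ⟨1, mem_insert _ _, hw1⟩
    · exact ⟨(a + w) / 2, mem_insert_of_mem _ ⟨⟨by linarith [ha.1], by linarith⟩, by linarith⟩,
        by linarith⟩

lemma charFun_map_eq_integral {Ω : Type*} [MeasurableSpace Ω] {P : Measure Ω} {Z : Ω → ℝ}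
    (hZ : Measurable Z) (t : ℝ) :
    charFun (P.map Z) t = ∫ ω, Complex.exp (Complex.I * ((t * Z ω : ℝ) : ℂ)) ∂P := by
  rw [charFun_apply_real, integral_map hZ.aemeasurable (by fun_prop)]
  congr with ω
  push_cast
  ring_nf

section

variable {Ω : Type*} [MeasurableSpace Ω] {P : Measure Ω} [IsProbabilityMeasure P]
  {Z W : Ω → ℝ} {β : ℝ}

lemma map_eq_of_integral_cexp_eq (hZ : Measurable Z) (hW : Measurable W)
    (h : ∀ t : ℝ, ∫ ω, Complex.exp (Complex.I * ((t * Z ω : ℝ) : ℂ)) ∂P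
      = ∫ ω, Complex.exp (Complex.I * ((t * W ω : ℝ) : ℂ)) ∂P) :
    P.map Z = P.map W :=
  Measure.ext_of_charFun <| funext fun t => by
    rw [charFun_map_eq_integral hZ, charFun_map_eq_integral hW, h]

lemma measure_setOf_le_toReal_eq_cdf_map (hZ : Measurable Z) (x : ℝ) :
    (P {ω | Z ω ≤ x}).toReal = cdf (P.map Z) x := by
  have := Measure.isProbabilityMeasure_map (μ := P) hZ.aemeasurable
  rw [cdf_eq_real, measureReal_def, Measure.map_apply hZ measurableSet_Iic]
  rfl

lemma VaR_eq_sInf_cdf_map (hZ : Measurable Z) :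
    VaR P β Z = sInf {x | 1 - β ≤ cdf (P.map Z) x} := by
  simp only [VaR, measure_setOf_le_toReal_eq_cdf_map hZ]

lemma VaR_congr_map (hZ : Measurable Z) (hW : Measurable W) (h : P.map Z = P.map W) :
    VaR P β Z = VaR P β W := by
  rw [VaR_eq_sInf_cdf_map hZ, VaR_eq_sInf_cdf_map hW, h]

lemma VaR_le_iff (hZ : Measurable Z) (hβ : β ∈ Ioo 0 1) (q : ℝ) :
    VaR P β Z ≤ q ↔ 1 - β ≤ (P {ω | Z ω ≤ q}).toReal := by
  have := Measure.isProbabilityMeasure_map (μ := P) hZ.aemeasurable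
  rw [VaR_eq_sInf_cdf_map hZ, measure_setOf_le_toReal_eq_cdf_map hZ]
  exact sInf_setOf_le_cdf_le_iff _ ⟨by linarith [hβ.2], by linarith [hβ.1]⟩ q

lemma VaR_const_add_mul (hZ : Measurable Z) (hβ : β ∈ Ioo 0 1) (a : ℝ) {b : ℝ} (hb : 0 ≤ b) :
    VaR P β (fun ω => a + b * Z ω) = a + b * VaR P β Z := by
  refine eq_of_forall_ge_iff fun q => ?_
  rw [VaR_le_iff (by fun_prop) hβ]
  rcases hb.eq_or_lt with rfl | hb
  · by_cases haq : a ≤ q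
    · simp [haq, hβ.1.le]
    · simp [haq, hβ.2]
  · have hset : {ω | a + b * Z ω ≤ q} = {ω | Z ω ≤ (q - a) / b} := by
      ext ω
      rw [mem_ofPred_eq, mem_ofPred_eq, le_div_iff₀' hb]
      constructor <;> intro <;> linarith
    rw [hset, ← VaR_le_iff hZ hβ, le_div_iff₀' hb]
    constructor <;> intro <;> linarith

variable {n : ℕ}

/-- `X ~ E_n(μ, M, τ)`. -/
def IsEllipticalWith (P : Measure Ω) (X : Fin n → Ω → ℝ) (μ : Fin n → ℝ)
    (M : Matrix (Fin n) (Fin n) ℝ) (τ : ℝ → ℂ) : Prop :=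
  ∀ t : Fin n → ℝ,
    (∫ ω, Complex.exp (Complex.I * ((∑ i, t i * X i ω : ℝ) : ℂ)) ∂P)
      = Complex.exp (Complex.I * ((∑ i, t i * μ i : ℝ) : ℂ)) * τ (∑ i, ∑ j, t i * M i j * t j)

lemma map_sum_mul_eq_map_const_add_mul {X : Fin n → Ω → ℝ} {μ : Fin n → ℝ}
    {M : Matrix (Fin n) (Fin n) ℝ} {τ : ℝ → ℂ} {Y : Ω → ℝ} (hX : ∀ i, Measurable (X i))
    (hXell : IsEllipticalWith P X μ M τ) (hM : M.PosSemidef) (hY : Measurable Y)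
    (hYchar : ∀ t : ℝ, (∫ ω, Complex.exp (Complex.I * ((t * Y ω : ℝ) : ℂ)) ∂P) = τ (t ^ 2))
    (w : Fin n → ℝ) :
    P.map (fun ω => ∑ i, w i * X i ω)
      = P.map (fun ω => ∑ i, w i * μ i + √(∑ i, ∑ j, w i * M i j * w j) * Y ω) := by
  set s := √(∑ i, ∑ j, w i * M i j * w j)
  have hs : s ^ 2 = ∑ i, ∑ j, w i * M i j * w j := Real.sq_sqrt <| by
    simpa [dotProduct, Matrix.mulVec, Finset.mul_sum, mul_comm, mul_left_comm]
      using hM.dotProduct_mulVec_nonneg w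
  refine map_eq_of_integral_cexp_eq (by fun_prop) (by fun_prop) fun t => ?_
  have hsplit (ω : Ω) : Complex.exp (Complex.I * ((t * (∑ i, w i * μ i + s * Y ω) : ℝ) : ℂ))
      = Complex.exp (Complex.I * ((∑ i, t * w i * μ i : ℝ) : ℂ))
        * Complex.exp (Complex.I * ((t * s * Y ω : ℝ) : ℂ)) := by
    rw [← Complex.exp_add]
    congr 1
    simp only [mul_assoc, ← Finset.mul_sum]
    push_cast
    ring
  have hquad : (t * s) ^ 2 = ∑ i, ∑ j, t * w i * M i j * (t * w j) := by
    simp only [mul_pow, hs, Finset.mul_sum]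
    ring_nf
  simp only [hsplit, Finset.mul_sum, ← mul_assoc]
  rw [integral_const_mul, hYchar, hquad, ← hXell]

lemma VaR_sum_mul_of_isEllipticalWith {X : Fin n → Ω → ℝ} {μ : Fin n → ℝ}
    {M : Matrix (Fin n) (Fin n) ℝ} {τ : ℝ → ℂ} {Y : Ω → ℝ} (hX : ∀ i, Measurable (X i))
    (hXell : IsEllipticalWith P X μ M τ) (hM : M.PosSemidef) (hY : Measurable Y)
    (hYchar : ∀ t : ℝ, (∫ ω, Complex.exp (Complex.I * ((t * Y ω : ℝ) : ℂ)) ∂P) = τ (t ^ 2))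
    (hβ : β ∈ Ioo 0 1) (w : Fin n → ℝ) :
    VaR P β (fun ω => ∑ i, w i * X i ω)
      = ∑ i, w i * μ i + √(∑ i, ∑ j, w i * M i j * w j) * VaR P β Y := by
  rw [VaR_congr_map (by fun_prop) (by fun_prop)
    (map_sum_mul_eq_map_const_add_mul hX hXell hM hY hYchar w)]
  exact VaR_const_add_mul hY hβ _ (Real.sqrt_nonneg _)

end

/-- for an elliptically distributed portfolio `X ~ E_n(μ, Σ, τ)`,
`DQ^{VaR}_α(X) = (1 − F(k_Σ · VaR_α(Y)))/α`, where `Y ~ E_1(0,1,τ)` with CDF `F` and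
`k_Σ = (∑_i σ_i)/(∑_{i,j} σ_{ij})^{1/2}`. -/
theorem DQVaR_elliptical
    {Ω : Type*} [MeasurableSpace Ω] (P : Measure Ω) [IsProbabilityMeasure P]
    {n : ℕ} (X : Fin n → Ω → ℝ) (hXm : ∀ i, Measurable (X i))
    (μ : Fin n → ℝ) (M : Matrix (Fin n) (Fin n) ℝ) (τ : ℝ → ℂ)
    (hM : M.PosSemidef) (hM1 : 0 < ∑ i, ∑ j, M i j)
    -- `X ~ E_n(μ, Σ, τ)`: characteristic function identity
    (hchar : ∀ t : Fin n → ℝ,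
      (∫ ω, Complex.exp (Complex.I * ((∑ i, t i * X i ω : ℝ) : ℂ)) ∂P)
        = Complex.exp (Complex.I * ((∑ i, t i * μ i : ℝ) : ℂ))
          * τ (∑ i, ∑ j, t i * M i j * t j))
    -- `Y ~ E_1(0, 1, τ)`
    (Y : Ω → ℝ) (hYm : Measurable Y)
    (hcharY : ∀ t : ℝ,
      (∫ ω, Complex.exp (Complex.I * ((t * Y ω : ℝ) : ℂ)) ∂P) = τ (t ^ 2))
    (kSig : ℝ)
    (hk : kSig = (∑ i, Real.sqrt (M i i)) / Real.sqrt (∑ i, ∑ j, M i j))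
    (α : ℝ) (hα : α ∈ Set.Ioo (0:ℝ) 1) :
    DQVaR P α X = (1 - (P {ω | Y ω ≤ kSig * VaR P α Y}).toReal) / α := by
  have hVaRX (i : Fin n) : VaR P α (X i) = μ i + √(M i i) * VaR P α Y := by
    simpa [Pi.single_apply] using
      VaR_sum_mul_of_isEllipticalWith hXm hchar hM hYm hcharY hα (Pi.single i 1)
  have hVaRS {β : ℝ} (hβ : β ∈ Ioo 0 1) :
      VaR P β (fun ω => ∑ i, X i ω) = ∑ i, μ i + √(∑ i, ∑ j, M i j) * VaR P β Y := by
    simpa using VaR_sum_mul_of_isEllipticalWith hXm hchar hM hYm hcharY hβ 1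
  have hset : {β : ℝ | β ∈ Ioo 0 1 ∧ VaR P β (fun ω => ∑ i, X i ω) ≤ ∑ i, VaR P α (X i)}
      = {β | β ∈ Ioo 0 1 ∧ 1 - (P {ω | Y ω ≤ kSig * VaR P α Y}).toReal ≤ β} := by
    ext β
    refine and_congr_right fun hβ => ?_
    rw [hVaRS hβ, Finset.sum_congr rfl fun i _ => hVaRX i, Finset.sum_add_distrib,
      ← Finset.sum_mul, add_le_add_iff_left, sub_le_comm, ← VaR_le_iff hYm hβ, hk,
      div_mul_eq_mul_div, le_div_iff₀' (Real.sqrt_pos.2 hM1)]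
  rw [DQVaR, hset, sInf_insert_one_setOf_le]
  exact ⟨sub_nonneg.2 measureReal_le_one, sub_le_self _ ENNReal.toReal_nonneg⟩
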